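/- arXiv:1504.00724 — 2 statements merged into one kernel-verified Lean document; each statement's English description precedes it below -/
import Mathlib

section
/- If the weighted graph underlying the electrical grid is connected and all branch admittances Y_{jk} have strictly positive real part, then the kernel of the bus admittance matrix Y_σ is one-dimensional, spanned by the all-ones vector. -/
/-- If the weighted graph underlying the electrical grid is connected and
all branch admittances have strictly positive real part, then the kernel of the bus
admittance matrix is one-dimensional, spanned by the all-ones vector. -/
theorem bus_admittance_kernel_eq_span_ones_of_connected
    (n : ℕ) (hn : 0 < n)
    (Yb : Fin n → Fin n → ℂ)
    (hsym : ∀ j k, Yb j k = Yb k j)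
    (hre : ∀ j k, j ≠ k → Yb j k ≠ 0 → 0 < (Yb j k).re)
    (G : SimpleGraph (Fin n))
    (hG : ∀ a b, G.Adj a b ↔ a ≠ b ∧ Yb a b ≠ 0)
    (hconn : G.Connected)
    (Y : Matrix (Fin n) (Fin n) ℂ)
    (hdiag : ∀ j, Y j j = ∑ l ∈ Finset.univ.erase j, Yb j l)
    (hoff : ∀ j k, j ≠ k → Y j k = - Yb j k) :
    LinearMap.ker Y.mulVecLin = Submodule.span ℂ {(fun _ => 1 : Fin n → ℂ)} := by
  apply le_antisymm
  · -- kernel ⊆ span of ones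
    intro v hv
    rw [LinearMap.mem_ker] at hv
    have hv' : ∀ j, ∑ k, Y j k * v k = 0 := by
      intro j
      have := congrFun hv j
      simpa [Matrix.mulVecLin_apply, Matrix.mulVec, dotProduct] using this
    -- key pointwise identity
    have key : ∀ j, ∑ k ∈ Finset.univ.erase j, Yb j k * (v j - v k) = 0 := by
      intro j
      have h1 : ∑ k ∈ Finset.univ.erase j, Yb j k * (v j - v k)
          = ∑ k ∈ Finset.univ.erase j, (Yb j k * v j + Y j k * v k) := by
        refine Finset.sum_congr rfl fun k hk => ?_
        rw [hoff j k (Ne.symm (Finset.mem_erase.mp hk).1)]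
        ring
      rw [h1, Finset.sum_add_distrib, ← Finset.sum_mul, ← hdiag j]
      have h2 : Y j j * v j + ∑ k ∈ Finset.univ.erase j, Y j k * v k
          = ∑ k, Y j k * v k :=
        Finset.add_sum_erase _ (fun k => Y j k * v k) (Finset.mem_univ j)
      rw [h2, hv' j]
    set c : ℂ → ℂ := fun z => (starRingEnd ℂ) z with hc
    set g : Fin n → Fin n → ℂ :=
      fun j k => if j = k then 0 else Yb j k * c (v j) * (v j - v k) with hgdef
    have hA : ∀ j, ∑ k, g j k = 0 := by
      intro j
      have h3 : g j j + ∑ k ∈ Finset.univ.erase j, g j k = ∑ k, g j k :=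
        Finset.add_sum_erase _ (g j) (Finset.mem_univ j)
      have h4 : g j j = 0 := by simp [hgdef]
      have h5 : ∑ k ∈ Finset.univ.erase j, g j k
          = c (v j) * ∑ k ∈ Finset.univ.erase j, Yb j k * (v j - v k) := by
        rw [Finset.mul_sum]
        refine Finset.sum_congr rfl fun k hk => ?_
        have hne : j ≠ k := Ne.symm (Finset.mem_erase.mp hk).1
        simp only [hgdef, if_neg hne]
        ring
      rw [← h3, h4, h5, key j, mul_zero, zero_add]
    have hAsum : ∑ j, ∑ k, (g j k + g k j) = 0 := by
      have h1 : ∑ j, ∑ k, g k j = (0 : ℂ) := by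
        rw [Finset.sum_comm]; simp [hA]
      simp [Finset.sum_add_distrib, hA, h1]
    have hterm : ∀ j k, g j k + g k j
        = if j = k then 0 else (Complex.normSq (v j - v k) : ℂ) * Yb j k := by
      intro j k
      by_cases h : j = k
      · subst h; simp [hgdef]
      · simp only [hgdef, if_neg h, if_neg (Ne.symm h)]
        rw [hsym k j]
        have hns : (Complex.normSq (v j - v k) : ℂ)
            = c (v j - v k) * (v j - v k) := Complex.normSq_eq_conj_mul_self
        have hcsub : c (v j - v k) = c (v j) - c (v k) := map_sub _ _ _
        rw [hns, hcsub]
        ring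
    have hre0 : ∑ j, ∑ k, (if j = k then (0:ℝ)
        else Complex.normSq (v j - v k) * (Yb j k).re) = 0 := by
      have hAsum' : ∑ j, ∑ k, (if j = k then (0:ℂ)
          else (Complex.normSq (v j - v k) : ℂ) * Yb j k) = 0 := by
        have e : ∑ j, ∑ k, (if j = k then (0:ℂ)
            else (Complex.normSq (v j - v k) : ℂ) * Yb j k)
            = ∑ j, ∑ k, (g j k + g k j) :=
          Finset.sum_congr rfl fun j _ => Finset.sum_congr rfl
            fun k _ => (hterm j k).symm
        rw [e, hAsum]
      have := congrArg Complex.re hAsum'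
      simp only [Complex.re_sum, apply_ite Complex.re, Complex.zero_re,
        Complex.re_ofReal_mul] at this
      exact this
    have hnonneg : ∀ j k : Fin n, (0:ℝ) ≤ (if j = k then (0:ℝ)
        else Complex.normSq (v j - v k) * (Yb j k).re) := by
      intro j k
      by_cases h : j = k
      · simp [h]
      · simp only [if_neg h]
        apply mul_nonneg (Complex.normSq_nonneg _)
        by_cases hz : Yb j k = 0
        · simp [hz]
        · exact (hre j k h hz).le
    have hzero : ∀ j k : Fin n, (if j = k then (0:ℝ)
        else Complex.normSq (v j - v k) * (Yb j k).re) = 0 := by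
      intro j k
      have h1 : ∀ j : Fin n, ∑ k, (if j = k then (0:ℝ)
          else Complex.normSq (v j - v k) * (Yb j k).re) = 0 := by
        have := (Finset.sum_eq_zero_iff_of_nonneg
          (fun j _ => Finset.sum_nonneg fun k _ => hnonneg j k)).mp hre0
        intro j; exact this j (Finset.mem_univ j)
      exact (Finset.sum_eq_zero_iff_of_nonneg
        (fun k _ => hnonneg j k)).mp (h1 j) k (Finset.mem_univ k)
    have hadj : ∀ j k, G.Adj j k → v j = v k := by
      intro j k hjk
      obtain ⟨hne, hYb⟩ := (hG j k).mp hjk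
      have h1 := hzero j k
      rw [if_neg hne] at h1
      have h2 : Complex.normSq (v j - v k) = 0 := by
        rcases mul_eq_zero.mp h1 with h | h
        · exact h
        · exact absurd h (ne_of_gt (hre j k hne hYb))
      exact sub_eq_zero.mp (Complex.normSq_eq_zero.mp h2)
    have hwalk : ∀ (a b : Fin n) (p : G.Walk a b), v a = v b := by
      intro a b p
      induction p with
      | nil => rfl
      | cons h _ ih => exact (hadj _ _ h).trans ih
    rw [Submodule.mem_span_singleton]
    refine ⟨v ⟨0, hn⟩, ?_⟩
    funext j
    have hr : G.Reachable ⟨0, hn⟩ j := hconn.preconnected _ _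
    obtain ⟨p⟩ := hr
    simp [Pi.smul_apply, smul_eq_mul, hwalk _ _ p]
  · -- span of ones ⊆ kernel
    rw [Submodule.span_le, Set.singleton_subset_iff, SetLike.mem_coe,
      LinearMap.mem_ker]
    funext j
    have h2 : Y j j + ∑ k ∈ Finset.univ.erase j, Y j k = ∑ k, Y j k :=
      Finset.add_sum_erase _ (fun k => Y j k) (Finset.mem_univ j)
    have h3 : ∑ k ∈ Finset.univ.erase j, Y j k
        = -∑ k ∈ Finset.univ.erase j, Yb j k := by
      rw [← Finset.sum_neg_distrib]
      exact Finset.sum_congr rfl fun k hk =>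
        hoff j k (Ne.symm (Finset.mem_erase.mp hk).1)
    have : ∑ k, Y j k = 0 := by
      rw [← h2, h3, hdiag j, add_neg_cancel]
    simpa [Matrix.mulVecLin_apply, Matrix.mulVec, dotProduct] using this
end

section
/- Under the uniform R/X assumption, if Y_σ = (1+iα) U Σ_R U*, then the pseudoinverse from Lemma 1 satisfies X_σ = (1+iα)⁻¹ Γ U Σ_R⁻¹ U* Γᵀ with Γ = I − 𝟙 e_0ᵀ; i.e., this matrix satisfies X_σ Y_σ = I − 𝟙 e_0ᵀ and X_σ e_0 = 0. -/
open Matrix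

/-- Under the uniform R/X assumption, if `Y_σ = (1+iα) U Σ_R U*`, then
the pseudoinverse of Lemma 1 satisfies `X_σ = (1+iα)⁻¹ Γ U Σ_R⁻¹ U* Γᵀ` with
`Γ = I − 𝟙 e₀ᵀ`; i.e., this matrix satisfies `X_σ Y_σ = I − 𝟙 e₀ᵀ` and `X_σ e₀ = 0`. -/
theorem green_matrix_formula_uniform_RX
    (n : ℕ) (hn : 0 < n) (α : ℝ)
    (U : Matrix (Fin n) (Fin (n - 1)) ℂ)
    (hU : U.conjTranspose * U = 1)
    (hUperp : U.conjTranspose.mulVec (fun _ => 1) = 0)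
    -- the columns of `U` span `𝟙^⊥`, i.e. `U U*` is the projection onto `𝟙^⊥`:
    (hproj : U * U.conjTranspose =
      1 - ((n : ℂ))⁻¹ • Matrix.vecMulVec (fun _ => 1) (fun _ => 1))
    (S : Fin (n - 1) → ℝ) (hS : ∀ i, 0 < S i)
    (Y : Matrix (Fin n) (Fin n) ℂ)
    (hY : Y = (1 + Complex.I * α) •
      (U * Matrix.diagonal (fun i => (S i : ℂ)) * U.conjTranspose))
    (Γ : Matrix (Fin n) (Fin n) ℂ)
    (hΓ : Γ = 1 - Matrix.of (fun _ j => if j = (⟨0, hn⟩ : Fin n) then (1 : ℂ) else 0))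
    (X : Matrix (Fin n) (Fin n) ℂ)
    (hX : X = (1 + Complex.I * α)⁻¹ •
      (Γ * U * (Matrix.diagonal (fun i => (S i : ℂ)))⁻¹ * U.conjTranspose * Γ.transpose)) :
    X * Y = 1 - Matrix.of (fun _ j => if j = (⟨0, hn⟩ : Fin n) then (1 : ℂ) else 0) ∧
    X.mulVec (Pi.single (⟨0, hn⟩ : Fin n) 1) = 0 := by
  subst hY hΓ hX
  set z : Fin n := ⟨0, hn⟩ with hz
  set M : Matrix (Fin n) (Fin n) ℂ :=
    Matrix.of (fun _ j => if j = z then (1 : ℂ) else 0) with hM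
  have hc : (1 + Complex.I * (α : ℂ)) ≠ 0 := by
    intro h
    have := congrArg Complex.re h
    simp [Complex.add_re, Complex.mul_re] at this
  have hsum : ∀ j, (∑ k, U k j) = 0 := by
    intro j
    have h := congrFun hUperp j
    simp [Matrix.mulVec, dotProduct, Matrix.conjTranspose_apply] at h
    have := congrArg star h
    simpa using this
  have hMTU : M.transpose * U = 0 := by
    ext i j
    simp only [Matrix.mul_apply, Matrix.transpose_apply, hM, Matrix.of_apply,
      Matrix.zero_apply, ite_mul, one_mul, zero_mul]
    by_cases h : i = z
    · simp [h, hsum j]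
    · simp [h]
  have hΓTU : (1 - M).transpose * U = U := by
    rw [Matrix.transpose_sub, Matrix.sub_mul, hMTU, Matrix.transpose_one, Matrix.one_mul,
      sub_zero]
  have hSne : ∀ i, ((S i : ℂ)) ≠ 0 := fun i => by exact_mod_cast (hS i).ne'
  have hDD : Matrix.diagonal (fun i => ((S i : ℂ))⁻¹) *
      Matrix.diagonal (fun i => (S i : ℂ)) = 1 := by
    rw [Matrix.diagonal_mul_diagonal]
    have h1 : (fun i => ((S i : ℂ))⁻¹ * (S i : ℂ)) = fun _ => (1 : ℂ) :=
      funext fun i => inv_mul_cancel₀ (hSne i)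
    rw [h1, Matrix.diagonal_one]
  have hDinv : (Matrix.diagonal (fun i => (S i : ℂ)))⁻¹ =
      Matrix.diagonal (fun i => ((S i : ℂ))⁻¹) := by
    apply Matrix.inv_eq_right_inv
    rw [Matrix.diagonal_mul_diagonal]
    have h1 : (fun i => (S i : ℂ) * ((S i : ℂ))⁻¹) = fun _ => (1 : ℂ) :=
      funext fun i => mul_inv_cancel₀ (hSne i)
    rw [h1, Matrix.diagonal_one]
  have hΓvv : (1 - M) * Matrix.vecMulVec (fun _ => (1 : ℂ)) (fun _ => 1) = 0 := by
    ext i j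
    simp only [Matrix.mul_apply, Matrix.sub_apply, Matrix.one_apply, hM, Matrix.of_apply,
      Matrix.vecMulVec_apply, Matrix.zero_apply, sub_mul, mul_one, one_mul]
    rw [Finset.sum_sub_distrib]
    simp
  constructor
  · rw [Matrix.smul_mul, Matrix.mul_smul, smul_smul, inv_mul_cancel₀ hc, one_smul]
    calc ((1 - M) * U * (Matrix.diagonal (fun i => (S i : ℂ)))⁻¹ * U.conjTranspose *
          (1 - M).transpose) * (U * Matrix.diagonal (fun i => (S i : ℂ)) * U.conjTranspose)
        = (1 - M) * U * ((Matrix.diagonal (fun i => (S i : ℂ)))⁻¹ *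
            ((U.conjTranspose * ((1 - M).transpose * U)) * Matrix.diagonal (fun i => (S i : ℂ)))) *
            U.conjTranspose := by
          simp only [Matrix.mul_assoc]
      _ = (1 - M) * (U * U.conjTranspose) := by
          rw [hΓTU, hU, Matrix.one_mul, hDinv, hDD, Matrix.mul_one, Matrix.mul_assoc]
      _ = 1 - M := by
          rw [hproj, Matrix.mul_sub, Matrix.mul_one, Matrix.mul_smul, hΓvv, smul_zero, sub_zero]
  · have hΓTe : (1 - M).transpose.mulVec (Pi.single z 1) = 0 := by
      ext i
      simp only [Matrix.mulVec, dotProduct, Matrix.transpose_apply, Matrix.sub_apply,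
        Matrix.one_apply, hM, Matrix.of_apply, Pi.zero_apply, sub_mul]
      rw [Finset.sum_sub_distrib]
      by_cases h : i = z <;> simp [Pi.single_apply, h, eq_comm]
    rw [Matrix.smul_mulVec, ← Matrix.mulVec_mulVec, hΓTe, Matrix.mulVec_zero, smul_zero]
end
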